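/- arXiv:2103.01017 — 2 statements merged into one kernel-verified Lean document; each statement's English description precedes it below -/
import Mathlib

section
/- Let D be a strongly connected digraph, let u and v be vertices of D, and let P be a directed path from u to v in D. Then the digraph obtained from D by reversing every arc of P is strongly connected if and only if u two-reaches v in D. -/
/-- The list of arcs (consecutive pairs) of a list of vertices. -/
def listArcs {V : Type*} (p : List V) : List (V × V) := p.zip p.tail

/-- `p` is a directed path from `u` to `v` in the digraph with arc set `A`. -/
def IsDipath {V : Type*} (A : Finset (V × V)) (u v : V) (p : List V) : Prop :=
  p ≠ [] ∧ p.head? = some u ∧ p.getLast? = some v ∧ p.Nodup ∧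
    p.Chain' (fun a b => (a, b) ∈ A)

/-- Two paths (given as vertex lists) are arc-disjoint. -/
def ArcDisjoint {V : Type*} (p q : List V) : Prop :=
  ∀ e ∈ listArcs p, e ∉ listArcs q

/-- `u` reaches `v`: there is a directed path from `u` to `v`. -/
def Reaches {V : Type*} (A : Finset (V × V)) (u v : V) : Prop :=
  ∃ p, IsDipath A u v p

/-- `u` two-reaches `v`: there are two arc-disjoint directed paths from `u` to `v`. -/
def TwoReaches {V : Type*} (A : Finset (V × V)) (u v : V) : Prop :=
  ∃ p q, IsDipath A u v p ∧ IsDipath A u v q ∧ ArcDisjoint p q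

/-- A digraph is strongly connected if every vertex reaches every other vertex. -/
def StronglyConnected {V : Type*} (A : Finset (V × V)) : Prop :=
  ∀ u v : V, Reaches A u v

/-- The digraph obtained by reversing every arc of the path `p`. -/
def reverseAlong {V : Type*} [DecidableEq V] (A : Finset (V × V)) (p : List V) :
    Finset (V × V) :=
  (A \ (listArcs p).toFinset) ∪ ((listArcs p).map Prod.swap).toFinset

/-- The indegree of a vertex in the digraph with arc set `A`. -/
def inDeg {V : Type*} [DecidableEq V] (A : Finset (V × V)) (v : V) : ℕ :=
  (A.filter (fun e => e.2 = v)).card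

/-- The indegree sequence: the indegrees of all vertices in non-increasing order. -/
def degSeq (V : Type*) [Fintype V] [DecidableEq V] (A : Finset (V × V)) : List ℕ :=
  ((Finset.univ.val.map (inDeg A)).sort (· ≤ ·)).reverse

/-- `A` is an orientation of the simple graph `G`: every edge of `G` gets exactly one
direction, and every arc of `A` comes from an edge of `G`. -/
def IsOrientation {V : Type*} (G : SimpleGraph V) (A : Finset (V × V)) : Prop :=
  (∀ a b : V, G.Adj a b ↔ ((a, b) ∈ A ∨ (b, a) ∈ A)) ∧
    ∀ a b : V, ¬((a, b) ∈ A ∧ (b, a) ∈ A)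

/-- The underlying undirected simple graph of a digraph. -/
def underlying {V : Type*} (A : Finset (V × V)) : SimpleGraph V :=
  SimpleGraph.fromRel (fun a b => (a, b) ∈ A)

/-- `p` is a directed path from `u` to `v` all of whose vertices lie in `S`. -/
def IsDipathIn {V : Type*} (A : Finset (V × V)) (S : Set V) (u v : V) (p : List V) : Prop :=
  IsDipath A u v p ∧ ∀ x ∈ p, x ∈ S

/-- `u` reaches `v` within the induced subdigraph on `S`. -/
def ReachesWithin {V : Type*} (A : Finset (V × V)) (S : Set V) (u v : V) : Prop :=
  ∃ p, IsDipathIn A S u v p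

/-!
Regard a multiset of arcs as a flow and record its net outflow at each vertex; a `u`-`v` path
has net outflow `1` at `u`, `-1` at `v` and `0` elsewhere. A multiset of arcs whose net outflow
is nonnegative away from `t` and positive at `s` contains a walk from `s` to `t`, so a set of arcs
with net outflow `2` at `u` and `-2` at `v` contains two arc-disjoint `u`-`v` paths.

If `q` is a `u`-`v` path after reversing `p`, the arcs of `q` that are arcs of `D`, together with
the arcs of `p` whose reversal `q` does not use, form such a set in `D`. Conversely, if `r₁, r₂`
are arc-disjoint `u`-`v` paths, cancelling the arcs they share with `p` from `r₁ + r₂ + reverse p`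
leaves arcs of the new digraph with net outflow `1` at `u`, so `u` still reaches `v`. As the
reversed `p` leads from each of its vertices to `u` and from `v` to each of its vertices, every
arc `(a, b)` of `p` is then replaced by a detour `a ⇝ u ⇝ v ⇝ b`.
-/

open Relation

section Arcs
variable {V : Type*}

@[simp] lemma listArcs_nil : listArcs ([] : List V) = [] := rfl

@[simp] lemma listArcs_singleton (a : V) : listArcs [a] = [] := rfl

@[simp] lemma listArcs_cons_cons (a b : V) (l : List V) :
    listArcs (a :: b :: l) = (a, b) :: listArcs (b :: l) := rfl

lemma listArcs_subset_cons (a : V) (l : List V) : listArcs l ⊆ listArcs (a :: l) := by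
  cases l with
  | nil => simp
  | cons b l => simp

lemma listArcs_subset_append (l₁ l₂ : List V) : listArcs l₂ ⊆ listArcs (l₁ ++ l₂) := by
  induction l₁ with
  | nil => exact List.Subset.refl _
  | cons a l ih => exact List.Subset.trans ih (listArcs_subset_cons a _)

lemma fst_mem_of_mem_listArcs {l : List V} {e : V × V} (h : e ∈ listArcs l) : e.1 ∈ l :=
  (List.of_mem_zip h).1

lemma snd_mem_of_mem_listArcs {l : List V} {e : V × V} (h : e ∈ listArcs l) : e.2 ∈ l :=
  List.mem_of_mem_tail (List.of_mem_zip h).2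

lemma isChain_iff_forall_mem_listArcs {R : V → V → Prop} {l : List V} :
    l.IsChain R ↔ ∀ e ∈ listArcs l, R e.1 e.2 := by
  induction l using List.twoStepInduction with
  | nil => simp
  | singleton a => simp
  | cons_cons a b l _ ih => simp [ih]

lemma nodup_listArcs {l : List V} (h : l.Nodup) : (listArcs l).Nodup := by
  induction l using List.twoStepInduction with
  | nil => simp
  | singleton a => simp
  | cons_cons a b l _ ih =>
    rw [List.nodup_cons] at h
    exact (ih b h.2).cons fun he ↦ h.1 (fst_mem_of_mem_listArcs he)

lemma exists_nodup_shortcut (a : V) (l : List V) :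
    ∃ m : List V, m.head? = some a ∧ m.getLast? = (a :: l).getLast? ∧ m.Nodup ∧
      listArcs m ⊆ listArcs (a :: l) := by
  induction l generalizing a with
  | nil => exact ⟨[a], rfl, rfl, List.nodup_singleton a, List.Subset.refl _⟩
  | cons b l ih =>
    obtain ⟨m, hhead, hlast, hnodup, harcs⟩ := ih b
    obtain ⟨m', rfl⟩ : ∃ m', m = b :: m' := by
      cases m with
      | nil => simp at hhead
      | cons c m' => simp_all
    have harcs' := List.Subset.trans harcs (listArcs_subset_cons a _)
    by_cases ha : a ∈ b :: m'
    · obtain ⟨s, r, hsplit⟩ := List.append_of_mem ha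
      refine ⟨a :: r, rfl, ?_, ?_, ?_⟩
      · rw [List.getLast?_cons_cons, ← hlast, hsplit, List.getLast?_append_of_ne_nil _ (by simp)]
      · exact hnodup.sublist (hsplit ▸ List.sublist_append_right s _)
      · exact List.Subset.trans (hsplit ▸ listArcs_subset_append s _) harcs'
    · refine ⟨a :: b :: m', rfl, by simpa using hlast, hnodup.cons ha, ?_⟩
      simpa using List.cons_subset_cons _ harcs

end Arcs

section Paths
variable {V : Type*} {A B : Finset (V × V)} {u v : V} {p : List V}

namespace IsDipath

lemma nodup (hp : IsDipath A u v p) : p.Nodup := hp.2.2.2.1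

lemma isChain (hp : IsDipath A u v p) : p.IsChain (fun a b ↦ (a, b) ∈ A) := hp.2.2.2.2

lemma mem_of_mem_listArcs (hp : IsDipath A u v p) {e : V × V} (he : e ∈ listArcs p) : e ∈ A :=
  isChain_iff_forall_mem_listArcs.1 hp.isChain e he

lemma nodup_coe_listArcs (hp : IsDipath A u v p) : (listArcs p : Multiset (V × V)).Nodup :=
  Multiset.coe_nodup.2 (nodup_listArcs hp.nodup)

lemma head_eq (hp : IsDipath A u v p) (hne : p ≠ []) : p.head hne = u := by
  simpa [List.head?_eq_some_head hne] using hp.2.1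

lemma getLast_eq (hp : IsDipath A u v p) (hne : p ≠ []) : p.getLast hne = v := by
  simpa [List.getLast?_eq_some_getLast hne] using hp.2.2.1

lemma mono (hp : IsDipath A u v p) (hAB : A ⊆ B) : IsDipath B u v p :=
  ⟨hp.1, hp.2.1, hp.2.2.1, hp.nodup, hp.isChain.imp fun _ _ h ↦ hAB h⟩

lemma coe_listArcs_le (hp : IsDipath A u v p) : (listArcs p : Multiset (V × V)) ≤ A.val :=
  (Multiset.le_iff_subset hp.nodup_coe_listArcs).2 fun _ he ↦ hp.mem_of_mem_listArcs he

lemma eq_cons (hp : IsDipath A u v p) : ∃ l, p = u :: l := by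
  obtain ⟨_, hhead, -⟩ := hp
  cases p with
  | nil => simp at hhead
  | cons a l => exact ⟨l, by simpa using hhead⟩

end IsDipath

lemma reaches_iff_reflTransGen : Reaches A u v ↔ ReflTransGen (fun a b ↦ (a, b) ∈ A) u v := by
  constructor
  · rintro ⟨p, hp⟩
    obtain ⟨l, rfl⟩ := hp.eq_cons
    refine List.relationReflTransGen_of_exists_isChain_cons l hp.isChain ?_
    simpa [List.getLast?_eq_some_getLast] using hp.2.2.1
  · intro h
    obtain ⟨l, hchain, hlast⟩ := List.exists_isChain_cons_of_relationReflTransGen h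
    obtain ⟨m, hhead, hm_last, hnodup, harcs⟩ := exists_nodup_shortcut u l
    refine ⟨m, by rintro rfl; simp at hhead, hhead, ?_, hnodup, ?_⟩
    · rw [hm_last, List.getLast?_eq_some_getLast (List.cons_ne_nil u l), hlast]
    · exact isChain_iff_forall_mem_listArcs.2 fun e he ↦
        isChain_iff_forall_mem_listArcs.1 hchain e (harcs he)

lemma twoReaches_self (A : Finset (V × V)) (u : V) : TwoReaches A u u :=
  ⟨[u], [u], ⟨by simp, rfl, rfl, by simp, List.isChain_singleton u⟩,
    ⟨by simp, rfl, rfl, by simp, List.isChain_singleton u⟩, by simp [ArcDisjoint]⟩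

lemma TwoReaches.mono (h : TwoReaches A u v) (hAB : A ⊆ B) : TwoReaches B u v :=
  let ⟨p, q, hp, hq, hpq⟩ := h
  ⟨p, q, hp.mono hAB, hq.mono hAB, hpq⟩

end Paths

section Flow
variable {V : Type*} [DecidableEq V]

def netOutflow (F : Multiset (V × V)) (x : V) : ℤ :=
  F.countP (·.1 = x) - F.countP (·.2 = x)

def unitFlow (s t x : V) : ℤ := (if s = x then 1 else 0) - (if t = x then 1 else 0)

@[simp] lemma unitFlow_self (s : V) : unitFlow s s = 0 := by
  ext x; simp [unitFlow]

lemma unitFlow_add_unitFlow (s t w : V) : unitFlow s t + unitFlow t w = unitFlow s w := by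
  ext x; simp only [unitFlow, Pi.add_apply]; ring

lemma unitFlow_nonneg {s t x : V} (hx : x ≠ t) : 0 ≤ unitFlow s t x := by
  simp only [unitFlow, if_neg (Ne.symm hx)]; split_ifs <;> norm_num

lemma unitFlow_left {s t : V} (hst : s ≠ t) : unitFlow s t s = 1 := by
  simp [unitFlow, hst.symm]

@[simp] lemma netOutflow_zero : netOutflow (0 : Multiset (V × V)) = 0 := by
  ext x; simp [netOutflow]

lemma netOutflow_add (F G : Multiset (V × V)) :
    netOutflow (F + G) = netOutflow F + netOutflow G := by
  ext x; simp only [netOutflow, Multiset.countP_add, Pi.add_apply]; push_cast; ring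

lemma netOutflow_sub {F G : Multiset (V × V)} (h : G ≤ F) :
    netOutflow (F - G) = netOutflow F - netOutflow G := by
  rw [eq_sub_iff_add_eq, ← netOutflow_add, tsub_add_cancel_of_le h]

lemma netOutflow_cons (e : V × V) (F : Multiset (V × V)) :
    netOutflow (e ::ₘ F) = unitFlow e.1 e.2 + netOutflow F := by
  ext x
  simp only [netOutflow, unitFlow, Multiset.countP_cons, Pi.add_apply]
  split_ifs <;> push_cast <;> ring

lemma netOutflow_map_swap (F : Multiset (V × V)) :
    netOutflow (F.map Prod.swap) = -netOutflow F := by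
  ext x
  simp only [netOutflow, Multiset.countP_map, ← Multiset.countP_eq_card_filter, Prod.fst_swap,
    Prod.snd_swap, Pi.neg_apply, neg_sub]

lemma netOutflow_listArcs_cons (a : V) (l : List V) :
    netOutflow (listArcs (a :: l)) = unitFlow a ((a :: l).getLast (List.cons_ne_nil a l)) := by
  induction l generalizing a with
  | nil => simp
  | cons b l ih =>
    rw [listArcs_cons_cons, ← Multiset.cons_coe, netOutflow_cons, ih, List.getLast_cons_cons,
      unitFlow_add_unitFlow]

lemma IsDipath.netOutflow_listArcs {A : Finset (V × V)} {u v : V} {p : List V}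
    (hp : IsDipath A u v p) : netOutflow (listArcs p) = unitFlow u v := by
  obtain ⟨l, rfl⟩ := hp.eq_cons
  rw [netOutflow_listArcs_cons]
  congr
  simpa [List.getLast?_eq_some_getLast] using hp.2.2.1

theorem reflTransGen_of_netOutflow {F : Multiset (V × V)} {s t : V}
    (hF : ∀ x ≠ t, 0 ≤ netOutflow F x) (hs : 0 < netOutflow F s) :
    ReflTransGen (fun a b ↦ (a, b) ∈ F) s t := by
  induction F using Multiset.strongInductionOn generalizing s with
  | ih F ih =>
  -- leave `s` along an arc `(s, w)`; deleting it keeps the hypotheses, now for `w` instead of `s`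
  obtain ⟨⟨a, w⟩, he, rfl⟩ : ∃ e ∈ F, e.1 = s := by
    rw [← Multiset.countP_pos]; unfold netOutflow at hs; omega
  dsimp only at hs
  by_cases hwt : w = t
  · exact hwt ▸ ReflTransGen.single he
  have hF' (x : V) : netOutflow F x = unitFlow a w x + netOutflow (F.erase (a, w)) x := by
    simpa only [Multiset.cons_erase he, Pi.add_apply] using
      congrFun (netOutflow_cons (a, w) (F.erase (a, w))) x
  refine ReflTransGen.head he (ReflTransGen.mono (fun _ _ h ↦ Multiset.mem_of_mem_erase h) _ _
    (ih _ (Multiset.erase_lt.2 he) (fun x hx ↦ ?_) ?_))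
  · have h₁ := hF' x
    have h₂ := hF x hx
    simp only [unitFlow] at h₁
    split_ifs at h₁ <;> subst_vars <;> omega
  · have h₁ := hF' w
    have h₂ := hF w hwt
    simp only [unitFlow] at h₁
    split_ifs at h₁ <;> subst_vars <;> omega

theorem reflTransGen_of_netOutflow_eq_nsmul {F : Multiset (V × V)} {s t : V} {n : ℕ}
    (hn : n ≠ 0) (hst : s ≠ t) (h : netOutflow F = n • unitFlow s t) :
    ReflTransGen (fun a b ↦ (a, b) ∈ F) s t := by
  refine reflTransGen_of_netOutflow (fun x hx ↦ ?_) ?_ <;>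
    simp only [h, Pi.smul_apply, nsmul_eq_mul]
  · exact mul_nonneg (Nat.cast_nonneg n) (unitFlow_nonneg hx)
  · rw [unitFlow_left hst, mul_one]; exact_mod_cast Nat.pos_of_ne_zero hn

theorem twoReaches_of_netOutflow {F : Finset (V × V)} (huv : u ≠ v)
    (hF : netOutflow F.val = 2 • unitFlow u v) : TwoReaches F u v := by
  obtain ⟨r₁, hr₁⟩ : Reaches F u v :=
    reaches_iff_reflTransGen.2 (reflTransGen_of_netOutflow_eq_nsmul two_ne_zero huv hF)
  set F₁ := F \ (listArcs r₁).toFinset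
  have hF₁ : netOutflow F₁.val = 1 • unitFlow u v := by
    rw [Finset.sdiff_val, List.toFinset_val, (nodup_listArcs hr₁.nodup).dedup,
      netOutflow_sub hr₁.coe_listArcs_le, hF, hr₁.netOutflow_listArcs]
    abel
  obtain ⟨r₂, hr₂⟩ : Reaches F₁ u v :=
    reaches_iff_reflTransGen.2 (reflTransGen_of_netOutflow_eq_nsmul one_ne_zero huv hF₁)
  refine ⟨r₁, r₂, hr₁, hr₂.mono Finset.sdiff_subset, fun e he₁ he₂ ↦ ?_⟩
  exact (Finset.mem_sdiff.1 (hr₂.mem_of_mem_listArcs he₂)).2 (List.mem_toFinset.2 he₁)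

end Flow

section Reversal
variable {V : Type*} [DecidableEq V] {A : Finset (V × V)} {u v : V} {p q : List V}

lemma mem_reverseAlong {e : V × V} :
    e ∈ reverseAlong A p ↔ (e ∈ A ∧ e ∉ listArcs p) ∨ e.swap ∈ listArcs p := by
  simp only [reverseAlong, Finset.mem_union, Finset.mem_sdiff, List.mem_toFinset, List.mem_map]
  refine or_congr Iff.rfl ⟨?_, fun h ↦ ⟨e.swap, h, e.swap_swap⟩⟩
  rintro ⟨f, hf, rfl⟩
  rwa [Prod.swap_swap]

theorem twoReaches_of_isDipath_reverseAlong (hp : IsDipath A u v p) (huv : u ≠ v)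
    (hq : IsDipath (reverseAlong A p) u v q) : TwoReaches A u v := by
  set P : Multiset (V × V) := ↑(listArcs p)
  set Qf := (listArcs q : Multiset (V × V)).filter (fun e ↦ e ∈ A ∧ e ∉ listArcs p)
  set Qb := (listArcs q : Multiset (V × V)).filter (fun e ↦ ¬(e ∈ A ∧ e ∉ listArcs p))
  have hQb : Qb.map Prod.swap ≤ P := by
    refine (Multiset.le_iff_subset ((hq.nodup_coe_listArcs.filter _).map Prod.swap_injective)).2 ?_
    simp only [Multiset.subset_iff, Multiset.mem_map, Multiset.mem_filter, Multiset.mem_coe]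
    rintro _ ⟨e, ⟨he, hnot⟩, rfl⟩
    exact (mem_reverseAlong.1 (hq.mem_of_mem_listArcs he)).resolve_left hnot
  set F := Qf + (P - Qb.map Prod.swap)
  have hF : F.Nodup := by
    refine Multiset.nodup_add.2 ⟨hq.nodup_coe_listArcs.filter _,
      Multiset.nodup_of_le tsub_le_self hp.nodup_coe_listArcs, Multiset.disjoint_left.2 ?_⟩
    intro e he heP
    exact (Multiset.mem_filter.1 he).2.2 (Multiset.mem_of_le tsub_le_self heP)
  have hFA : ⟨F, hF⟩ ⊆ A := by
    intro e (he : e ∈ F)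
    rcases Multiset.mem_add.1 he with he | he
    · exact (Multiset.mem_filter.1 he).2.1
    · exact hp.mem_of_mem_listArcs (Multiset.mem_of_le tsub_le_self he)
  have hQ : netOutflow Qf + netOutflow Qb = unitFlow u v := by
    rw [← netOutflow_add, Multiset.filter_add_not, hq.netOutflow_listArcs]
  have hflow : netOutflow F = 2 • unitFlow u v := by
    rw [netOutflow_add, netOutflow_sub hQb, netOutflow_map_swap, hp.netOutflow_listArcs, ← hQ]
    abel
  exact (twoReaches_of_netOutflow (F := ⟨F, hF⟩) huv hflow).mono hFA

theorem reflTransGen_reverseAlong_of_twoReaches (hp : IsDipath A u v p)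
    (h : TwoReaches A u v) : ReflTransGen (fun a b ↦ (a, b) ∈ reverseAlong A p) u v := by
  obtain rfl | huv := eq_or_ne u v
  · rfl
  obtain ⟨r₁, r₂, hr₁, hr₂, hdisj⟩ := h
  set P : Multiset (V × V) := ↑(listArcs p)
  set R : Multiset (V × V) := ↑(listArcs r₁) + ↑(listArcs r₂)
  have hR : R.Nodup := Multiset.nodup_add.2 ⟨hr₁.nodup_coe_listArcs, hr₂.nodup_coe_listArcs,
    Multiset.disjoint_left.2 fun he₁ he₂ ↦ hdisj _ he₁ he₂⟩
  set F := (R - P) + (P - R).map Prod.swap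
  have hflow : netOutflow F = 1 • unitFlow u v := by
    rw [netOutflow_add, netOutflow_map_swap, ← Multiset.sub_inter, ← Multiset.sub_inter P,
      Multiset.inter_comm P, netOutflow_sub Multiset.inter_le_left,
      netOutflow_sub Multiset.inter_le_right, netOutflow_add, hr₁.netOutflow_listArcs,
      hr₂.netOutflow_listArcs, hp.netOutflow_listArcs]
    abel
  have hF : ∀ e ∈ F, e ∈ reverseAlong A p := by
    intro e he
    rcases Multiset.mem_add.1 he with he | he
    · obtain ⟨heR, heP⟩ := (Multiset.mem_sub_of_nodup hR).1 he
      refine mem_reverseAlong.2 (Or.inl ⟨?_, heP⟩)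
      rcases Multiset.mem_add.1 heR with he' | he'
      · exact hr₁.mem_of_mem_listArcs he'
      · exact hr₂.mem_of_mem_listArcs he'
    · obtain ⟨f, hf, rfl⟩ := Multiset.mem_map.1 he
      exact mem_reverseAlong.2 (Or.inr (by simpa [P] using Multiset.mem_of_le tsub_le_self hf))
  exact ReflTransGen.mono (fun _ _ h ↦ hF _ h) _ _
    (reflTransGen_of_netOutflow_eq_nsmul one_ne_zero huv hflow)

theorem stronglyConnected_reverseAlong (hsc : StronglyConnected A) (hp : IsDipath A u v p)
    (huv : ReflTransGen (fun a b ↦ (a, b) ∈ reverseAlong A p) u v) :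
    StronglyConnected (reverseAlong A p) := by
  set R : V → V → Prop := fun a b ↦ (a, b) ∈ reverseAlong A p
  have hrev : p.IsChain (fun a b ↦ R b a) :=
    isChain_iff_forall_mem_listArcs.2 fun e he ↦ mem_reverseAlong.2 (Or.inr he)
  have to_u : ∀ a ∈ p, ReflTransGen R a u :=
    hrev.induction _ p (fun _ _ hyx hx ↦ hx.head hyx) fun hne ↦ hp.head_eq hne ▸ .refl
  have from_v : ∀ a ∈ p, ReflTransGen R v a :=
    hrev.backwards_induction _ p (fun _ _ hyx hy ↦ hy.tail hyx)
      fun hne ↦ hp.getLast_eq hne ▸ .refl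
  intro x y
  refine reaches_iff_reflTransGen.2 (reflTransGen_closed (fun a b hab ↦ ?_) _ _
    (reaches_iff_reflTransGen.1 (hsc x y)))
  by_cases habp : (a, b) ∈ listArcs p
  · exact (to_u a (fst_mem_of_mem_listArcs habp)).trans
      (huv.trans (from_v b (snd_mem_of_mem_listArcs habp)))
  · exact .single (mem_reverseAlong.2 (Or.inl ⟨hab, habp⟩))

end Reversal

theorem stmt_0_general {V : Type*} [DecidableEq V] (A : Finset (V × V))
    (hsc : StronglyConnected A) (u v : V) (p : List V) (hp : IsDipath A u v p) :
    StronglyConnected (reverseAlong A p) ↔ TwoReaches A u v := by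
  refine ⟨fun hsc' ↦ ?_, fun h ↦
    stronglyConnected_reverseAlong hsc hp (reflTransGen_reverseAlong_of_twoReaches hp h)⟩
  obtain rfl | huv := eq_or_ne u v
  · exact twoReaches_self A u
  obtain ⟨q, hq⟩ := hsc' u v
  exact twoReaches_of_isDipath_reverseAlong hp huv hq

/-- Reversing a directed path from `u` to `v` in a strongly connected digraph yields a
strongly connected digraph if and only if `u` two-reaches `v`. -/
theorem stmt_0 {V : Type*} [Fintype V] [DecidableEq V] (A : Finset (V × V))
    (hsc : StronglyConnected A) (u v : V) (p : List V) (hp : IsDipath A u v p) :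
    StronglyConnected (reverseAlong A p) ↔ TwoReaches A u v :=
  stmt_0_general A hsc u v p hp
end

section
/- Let G = (V, E) be a simple undirected graph, let Λ be a strongly connected orientation of G, and let U be a nonempty proper subset of V. Then the sum over u ∈ U of the indegree of u in Λ is at least |E(G[U])| + c(G[V∖U]), where G[U] is the subgraph of G induced on U and c(G[V∖U]) is the number of connected components of the subgraph of G induced on V∖U. -/
/-!
Each arc with head in `U` contributes once to the indegree sum, and such an arc either lies
inside `U` or enters `U` from outside. The arcs inside `U` cover the edges of `G[U]`. For the
components: by strong connectivity every vertex outside `U` has a directed path into `U`; the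
first arc of it that enters `U` starts in the same component of `G[V ∖ U]`, so every component
contains the tail of some arc entering `U`.
-/

open Finset

section

variable {V : Type*} [DecidableEq V]

lemma sum_inDeg_eq_card_filter (A : Finset (V × V)) (U : Finset V) :
    ∑ u ∈ U, inDeg A u = #{e ∈ A | e.2 ∈ U} := by
  rw [card_eq_sum_card_fiberwise (s := {e ∈ A | e.2 ∈ U}) (t := U) (f := Prod.snd)
    fun e he => (mem_filter.mp he).2]
  refine sum_congr rfl fun u hu => ?_
  simp only [inDeg, filter_filter]
  congr 1
  ext e
  simp only [mem_filter]
  grind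

lemma card_edgeSet_induce_le {G : SimpleGraph V} {A : Finset (V × V)}
    (hGA : ∀ a b, G.Adj a b ↔ (a, b) ∈ A ∨ (b, a) ∈ A) (U : Finset V) :
    Nat.card (G.induce (↑U : Set V)).edgeSet ≤ #{e ∈ A | e.1 ∈ U ∧ e.2 ∈ U} := by
  set B := {e ∈ A | e.1 ∈ U ∧ e.2 ∈ U}
  have memB {a b : V} : (a, b) ∈ B ↔ (a, b) ∈ A ∧ a ∈ U ∧ b ∈ U := mem_filter
  let toEdge : B → (G.induce (↑U : Set V)).edgeSet := fun e =>
    ⟨s(⟨e.1.1, (memB.mp e.2).2.1⟩, ⟨e.1.2, (memB.mp e.2).2.2⟩),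
      (hGA _ _).mpr (.inl (memB.mp e.2).1)⟩
  have hsurj : Function.Surjective toEdge := by
    rintro ⟨e, he⟩
    induction e using Sym2.ind with
    | _ x y =>
      rcases (hGA x y).mp he with hxy | hyx
      · exact ⟨⟨(x, y), memB.mpr ⟨hxy, x.2, y.2⟩⟩, rfl⟩
      · exact ⟨⟨(y, x), memB.mpr ⟨hyx, y.2, x.2⟩⟩, Subtype.ext Sym2.eq_swap⟩
  calc Nat.card (G.induce (↑U : Set V)).edgeSet ≤ Nat.card B :=
        Nat.card_le_card_of_surjective toEdge hsurj
    _ = #B := Nat.card_eq_finsetCard B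

lemma exists_reachable_arc_into_of_isChain {G : SimpleGraph V} {A : Finset (V × V)}
    (hA : ∀ a b, (a, b) ∈ A → G.Adj a b) (U : Finset V) (p : List V) :
    ∀ c (hc : c ∈ (↑U : Set V)ᶜ), (c :: p).IsChain (fun a b => (a, b) ∈ A) →
      (∃ u ∈ p, u ∈ U) → ∃ x, ∃ hx : x ∈ (↑U : Set V)ᶜ, ∃ y ∈ U, (x, y) ∈ A ∧
        (G.induce (↑U : Set V)ᶜ).Reachable ⟨c, hc⟩ ⟨x, hx⟩ := by
  induction p with
  | nil => simp
  | cons b p ih =>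
    intro c hc hchain hpU
    obtain ⟨hcb, hchain⟩ := List.isChain_cons_cons.mp hchain
    by_cases hb : b ∈ U
    · exact ⟨c, hc, b, hb, hcb, .rfl⟩
    have hb' : b ∈ (↑U : Set V)ᶜ := hb
    have hpU : ∃ u ∈ p, u ∈ U := by
      obtain ⟨u, hu, huU⟩ := hpU
      exact ⟨u, (List.mem_cons.mp hu).resolve_left (by rintro rfl; exact hb huU), huU⟩
    obtain ⟨x, hx, y, hy, hxy, hbx⟩ := ih b hb' hchain hpU
    have hcb' : (G.induce (↑U : Set V)ᶜ).Adj ⟨c, hc⟩ ⟨b, hb'⟩ := hA c b hcb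
    exact ⟨x, hx, y, hy, hxy, hcb'.reachable.trans hbx⟩

lemma card_connectedComponent_induce_compl_le {G : SimpleGraph V} {A : Finset (V × V)}
    (hA : ∀ a b, (a, b) ∈ A → G.Adj a b) (U : Finset V)
    (hreach : ∀ c, ∃ u ∈ U, Reaches A c u) :
    Nat.card (G.induce (↑U : Set V)ᶜ).ConnectedComponent ≤ #{e ∈ A | e.1 ∉ U ∧ e.2 ∈ U} := by
  set B := {e ∈ A | e.1 ∉ U ∧ e.2 ∈ U}
  have memB {a b : V} : (a, b) ∈ B ↔ (a, b) ∈ A ∧ a ∉ U ∧ b ∈ U := mem_filter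
  let toComponent : B → (G.induce (↑U : Set V)ᶜ).ConnectedComponent := fun e =>
    (G.induce (↑U : Set V)ᶜ).connectedComponentMk ⟨e.1.1, (memB.mp e.2).2.1⟩
  have hsurj : Function.Surjective toComponent := by
    intro C
    induction C using SimpleGraph.ConnectedComponent.ind with
    | _ c =>
      obtain ⟨c, hc⟩ := c
      obtain ⟨u, hu, p, -, hhead, hlast, -, hchain⟩ := hreach c
      obtain ⟨p, rfl⟩ : ∃ q, p = c :: q := ⟨p.tail, (List.cons_head?_tail hhead).symm⟩
      have hup : u ∈ p := by
        rcases List.mem_cons.mp (List.mem_of_getLast? hlast) with rfl | hup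
        · exact absurd hu hc
        · exact hup
      obtain ⟨x, hx, y, hy, hxy, hcx⟩ :=
        exists_reachable_arc_into_of_isChain hA U p c hc hchain ⟨u, hup, hu⟩
      exact ⟨⟨(x, y), memB.mpr ⟨hxy, hx, hy⟩⟩, SimpleGraph.ConnectedComponent.sound hcx.symm⟩
  calc Nat.card (G.induce (↑U : Set V)ᶜ).ConnectedComponent ≤ Nat.card B :=
        Nat.card_le_card_of_surjective toComponent hsurj
    _ = #B := Nat.card_eq_finsetCard B

end

theorem stmt_8_general {V : Type*} [DecidableEq V] (G : SimpleGraph V)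
    (A : Finset (V × V)) (hor : IsOrientation G A) (hsc : StronglyConnected A)
    (U : Finset V) (hne : U.Nonempty) :
    Nat.card (G.induce (↑U : Set V)).edgeSet +
        Nat.card ((G.induce ((↑U : Set V)ᶜ)).ConnectedComponent) ≤
      ∑ u ∈ U, inDeg A u := by
  have hA : ∀ a b, (a, b) ∈ A → G.Adj a b := fun a b h => (hor.1 a b).mpr (.inl h)
  obtain ⟨u, hu⟩ := hne
  have hsplit : #{e ∈ A | e.2 ∈ U} =
      #{e ∈ A | e.1 ∈ U ∧ e.2 ∈ U} + #{e ∈ A | e.1 ∉ U ∧ e.2 ∈ U} := by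
    rw [← card_filter_add_card_filter_not (s := {e ∈ A | e.2 ∈ U}) (fun e => e.1 ∈ U),
      filter_filter, filter_filter]
    simp only [and_comm]
  rw [sum_inDeg_eq_card_filter, hsplit]
  exact add_le_add (card_edgeSet_induce_le hor.1 U)
    (card_connectedComponent_induce_compl_le hA U fun c => ⟨u, hu, hsc c u⟩)

/-- For a strongly connected orientation `A` of a simple graph `G` and a nonempty proper
vertex subset `U`, the sum of indegrees over `U` is at least the number of edges of
`G[U]` plus the number of connected components of `G[V ∖ U]`. -/
theorem stmt_8 {V : Type*} [Fintype V] [DecidableEq V] (G : SimpleGraph V)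
    (A : Finset (V × V)) (hor : IsOrientation G A) (hsc : StronglyConnected A)
    (U : Finset V) (hne : U.Nonempty) (hproper : U ≠ Finset.univ) :
    Nat.card (G.induce (↑U : Set V)).edgeSet +
        Nat.card ((G.induce ((↑U : Set V)ᶜ)).ConnectedComponent) ≤
      ∑ u ∈ U, inDeg A u :=
  stmt_8_general G A hor hsc U hne
end
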